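/- Let q be a prime and G a commutative group written multiplicatively in which every element x satisfies x^q = 1. Let ℓ′ be a positive integer, y ∈ G, g : Fin ℓ′ → G, challenges c, c′ ∈ ZMod q with c ≠ c′, and responses z, z′ : Fin ℓ′ → ZMod q. If y^c · ∏_j (g j)^{z j} = y^{c′} · ∏_j (g j)^{z′ j}, then y = ∏_j (g j)^{(z′ j − z j)·(c − c′)⁻¹}. (Special soundness: two accepting Σ-protocol transcripts with distinct challenges determine a representation of y in the bases g_j.) -/

import Mathlib

/-! Since every element has exponent dividing `q`, exponents can be computed in `ZMod q`.
Dividing the two acceptance equations gives `y ^ (c - c') = ∏ j, g j ^ (z' j - z j)`,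
and raising both sides to `(c - c')⁻¹` recovers `y`. -/

section PowVal

variable {M : Type*} [Monoid M] {n : ℕ} {x : M}

theorem pow_zmod_val_add [NeZero n] (hx : x ^ n = 1) (a b : ZMod n) :
    x ^ (a + b).val = x ^ a.val * x ^ b.val := by
  rw [ZMod.val_add, ← pow_eq_pow_mod _ hx, pow_add]

theorem pow_zmod_val_mul (hx : x ^ n = 1) (a b : ZMod n) :
    x ^ (a * b).val = (x ^ a.val) ^ b.val := by
  rw [ZMod.val_mul, ← pow_eq_pow_mod _ hx, pow_mul]

end PowVal

section ProdPowVal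

variable {M ι : Type*} [CommMonoid M] [Fintype ι] {n : ℕ} {g : ι → M}

theorem prod_pow_zmod_val_add [NeZero n] (hg : ∀ j, g j ^ n = 1) (u w : ι → ZMod n) :
    ∏ j, g j ^ (u j + w j).val = (∏ j, g j ^ (u j).val) * ∏ j, g j ^ (w j).val := by
  simp only [pow_zmod_val_add (hg _), Finset.prod_mul_distrib]

theorem prod_pow_zmod_val_mul (hg : ∀ j, g j ^ n = 1) (u : ι → ZMod n) (a : ZMod n) :
    ∏ j, g j ^ (u j * a).val = (∏ j, g j ^ (u j).val) ^ a.val := by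
  simp only [pow_zmod_val_mul (hg _), Finset.prod_pow]

end ProdPowVal

theorem sigma_protocol_special_soundness_general
    {q : ℕ} (hq : q.Prime)
    {G : Type*} [CommGroup G] (hG : ∀ x : G, x ^ q = 1)
    (ℓ' : ℕ)
    (y : G) (g : Fin ℓ' → G)
    (c c' : ZMod q) (hcc : c ≠ c')
    (z z' : Fin ℓ' → ZMod q)
    (hacc : y ^ c.val * ∏ j : Fin ℓ', (g j) ^ (z j).val =
            y ^ c'.val * ∏ j : Fin ℓ', (g j) ^ (z' j).val) :
    y = ∏ j : Fin ℓ', (g j) ^ (((z' j - z j) * (c - c')⁻¹).val) := by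
  have : Fact q.Prime := ⟨hq⟩
  have hg : ∀ j, g j ^ q = 1 := fun j => hG (g j)
  have key : y ^ (c - c').val = ∏ j, g j ^ (z' j - z j).val := by
    refine mul_right_cancel (b := y ^ c'.val * ∏ j, g j ^ (z j).val) ?_
    calc y ^ (c - c').val * (y ^ c'.val * ∏ j, g j ^ (z j).val)
        = y ^ c.val * ∏ j, g j ^ (z j).val := by
          rw [← mul_assoc, ← pow_zmod_val_add (hG y), sub_add_cancel]
      _ = y ^ c'.val * ∏ j, g j ^ (z' j).val := hacc
      _ = (∏ j, g j ^ (z' j - z j).val) * (y ^ c'.val * ∏ j, g j ^ (z j).val) := by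
          rw [mul_left_comm, ← prod_pow_zmod_val_add hg]
          simp only [sub_add_cancel]
  calc y = y ^ ((c - c') * (c - c')⁻¹).val := by
        rw [mul_inv_cancel₀ (sub_ne_zero.2 hcc), ZMod.val_one, pow_one]
    _ = ∏ j, g j ^ ((z' j - z j) * (c - c')⁻¹).val := by
        rw [pow_zmod_val_mul (hG y), key, prod_pow_zmod_val_mul hg]

/-- Special soundness of the Σ-protocol: two accepting transcripts with
distinct challenges determine a representation of `y` in the bases `g j`. -/
theorem sigma_protocol_special_soundness
    {q : ℕ} (hq : q.Prime)
    {G : Type*} [CommGroup G] (hG : ∀ x : G, x ^ q = 1)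
    (ℓ' : ℕ) (hℓ' : 0 < ℓ')
    (y : G) (g : Fin ℓ' → G)
    (c c' : ZMod q) (hcc : c ≠ c')
    (z z' : Fin ℓ' → ZMod q)
    (hacc : y ^ c.val * ∏ j : Fin ℓ', (g j) ^ (z j).val =
            y ^ c'.val * ∏ j : Fin ℓ', (g j) ^ (z' j).val) :
    y = ∏ j : Fin ℓ', (g j) ^ (((z' j - z j) * (c - c')⁻¹).val) :=
  sigma_protocol_special_soundness_general hq hG ℓ' y g c c' hcc z z' hacc
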